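/- arXiv:2311.00957 — 2 statements merged into one kernel-verified Lean document; each statement's English description precedes it below -/
import Mathlib

section
/- Under the blanket assumptions, let (x,y) ∈ dom(Q), α > 0, and y⁺ := prox_{αg*}(y + αx). Then (x, y⁺) ∈ dom(Q), and for every real c ≥ Q(x,y) it holds that ζ(x) + (c/α)·‖y − y⁺‖₂² ≤ c·η(x, y⁺). -/
/-!
Optimality of `y⁺` for the proximal problem of the convex function `α g*`, tested against the
points of the segment from `y⁺` to `y` and letting the step go to `0`, gives the variational
inequality `α g*(y⁺) + ⟪y + α x - y⁺, y - y⁺⟫ ≤ α g*(y)`, i.e.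
`α η(x, y) + ‖y - y⁺‖² ≤ α η(x, y⁺)`. So `η` increases along the step, `(x, y⁺) ∈ dom Q`, and
`ζ(x) ≤ c η(x, y)` with `c ≥ 0` (as `ζ ≥ 0`) yields the estimate.
-/

open Filter Topology Set
open scoped RealInnerProductSpace Pointwise NNReal

noncomputable section

namespace Paper

variable {E : Type*} [NormedAddCommGroup E] [InnerProductSpace ℝ E]

/-- The effective domain of an extended-real-valued function. -/
def edom (φ : E → EReal) : Set E := {x | φ x ≠ ⊤}

/-- A function with values in `(-∞, +∞]` is proper if it is not identically `+∞`
and never takes the value `-∞`. -/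
def Proper (φ : E → EReal) : Prop := (∃ x, φ x ≠ ⊤) ∧ ∀ x, φ x ≠ ⊥

/-- The Fréchet subdifferential of `φ` at `x`. -/
def frSubdiff (φ : E → EReal) (x : E) : Set E :=
  {y | φ x ≠ ⊤ ∧ 0 ≤ Filter.liminf
      (fun z : E => (φ z - φ x - ((⟪y, z - x⟫ : ℝ) : EReal)) * ((‖z - x‖⁻¹ : ℝ) : EReal))
      (𝓝[≠] x)}

/-- The limiting (Mordukhovich) subdifferential of `φ` at `x`. -/
def limSubdiff (φ : E → EReal) (x : E) : Set E :=
  {y | ∃ u v : ℕ → E,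
      Tendsto u atTop (𝓝 x) ∧ Tendsto (fun k => φ (u k)) atTop (𝓝 (φ x)) ∧
      (∀ k, v k ∈ frSubdiff φ (u k)) ∧ Tendsto v atTop (𝓝 y)}

/-- The convex subdifferential of a real-valued function. -/
def cvxSubdiff (g : E → ℝ) (x : E) : Set E :=
  {y | ∀ z, g x + ⟪y, z - x⟫ ≤ g z}

/-- The convex subdifferential of an extended-real-valued function. -/
def cvxSubdiffE (φ : E → EReal) (x : E) : Set E :=
  {y | ∀ z, φ x + ((⟪y, z - x⟫ : ℝ) : EReal) ≤ φ z}

/-- The Fenchel conjugate of an extended-real-valued function. -/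
def fconjE (φ : E → EReal) : E → EReal :=
  fun y => ⨆ x : E, (((⟪x, y⟫ : ℝ) : EReal) - φ x)

/-- The Fenchel conjugate of a real-valued function. -/
def fconj (g : E → ℝ) : E → EReal := fconjE (fun x => ((g x : ℝ) : EReal))

/-- `φ` satisfies the calmness condition at `x` relative to `A`. -/
def CalmAt (φ : E → EReal) (x : E) (A : Set E) : Prop :=
  ∃ κ : ℝ, 0 < κ ∧ ∃ B ∈ 𝓝 x, ∀ u ∈ B ∩ A,
    φ u ≤ φ x + ((κ * ‖u - x‖ : ℝ) : EReal) ∧ φ x ≤ φ u + ((κ * ‖u - x‖ : ℝ) : EReal)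

/-- `φ` satisfies the calmness condition on `A`. -/
def CalmOn (φ : E → EReal) (A : Set E) : Prop := ∀ x ∈ A, CalmAt φ x A

/-- The Kurdyka–Łojasiewicz property of `φ` at `x`. -/
def KLAt (φ : E → EReal) (x : E) : Prop :=
  ∃ ε > (0 : ℝ), ∃ δ > (0 : ℝ), ∃ ϕ ϕ' : ℝ → ℝ,
    ϕ 0 = 0 ∧ ContinuousOn ϕ (Set.Ico 0 ε) ∧ ConcaveOn ℝ (Set.Ico 0 ε) ϕ ∧
    (∀ s ∈ Set.Ioo (0 : ℝ) ε, HasDerivAt ϕ (ϕ' s) s) ∧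
    ContinuousOn ϕ' (Set.Ioo 0 ε) ∧ (∀ s ∈ Set.Ioo (0 : ℝ) ε, 0 < ϕ' s) ∧
    ∀ z ∈ Metric.ball x δ, φ x < φ z → φ z < φ x + (ε : EReal) →
      1 ≤ ENNReal.ofReal (ϕ' ((φ z).toReal - (φ x).toReal)) *
        EMetric.infEdist (0 : E) (limSubdiff φ z)

/-- The KL property of `φ` at `x` with exponent `θ`. -/
def KLExpAt (φ : E → EReal) (x : E) (θ : ℝ) : Prop :=
  ∃ c > (0 : ℝ), ∃ ε > (0 : ℝ), ∃ δ > (0 : ℝ),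
    ∀ z ∈ Metric.ball x δ, φ x < φ z → φ z < φ x + (ε : EReal) →
      ENNReal.ofReal (c * ((φ z).toReal - (φ x).toReal) ^ θ) ≤
        EMetric.infEdist (0 : E) (limSubdiff φ z)

/-- The (possibly multivalued) proximity operator of `φ`. -/
def proxSet (φ : E → EReal) (u : E) : Set E :=
  {z | ∀ w, φ z + ((‖z - u‖ ^ 2 / 2 : ℝ) : EReal) ≤ φ w + ((‖w - u‖ ^ 2 / 2 : ℝ) : EReal)}

/-- A positive scaling of an extended-real-valued function. -/
def scaleE (α : ℝ) (φ : E → EReal) : E → EReal := fun x => ((α : ℝ) : EReal) * φ x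

/-- `h` is locally Lipschitz differentiable on `s`. -/
def LocLipGradOn [CompleteSpace E] (h : E → ℝ) (s : Set E) : Prop :=
  (∀ x ∈ s, DifferentiableAt ℝ h x) ∧
  ∀ x ∈ s, ∃ U ∈ 𝓝 x, ∃ L : ℝ, ∀ u ∈ U ∩ s, ∀ v ∈ U ∩ s,
    ‖gradient h u - gradient h v‖ ≤ L * ‖u - v‖

/-- The numerator `ζ = f + h`. -/
def zeta (f : E → EReal) (h : E → ℝ) (x : E) : EReal := f x + ((h x : ℝ) : EReal)

/-- `η(x,y) = ⟨x,y⟩ − g^*(y)`. -/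
def eta (g : E → ℝ) (x y : E) : EReal := ((⟪x, y⟫ : ℝ) : EReal) - fconj g y

/-- The extended objective of the fractional problem. -/
def Ffun (f : E → EReal) (g h : E → ℝ) (x : E) : EReal :=
  if g x ≠ 0 ∧ f x ≠ ⊤ then ((((f x).toReal + h x) / g x : ℝ) : EReal) else ⊤

/-- The extended objective of the reformulated problem. -/
def Qfun (f : E → EReal) (g h : E → ℝ) (x y : E) : EReal :=
  if f x ≠ ⊤ ∧ 0 < eta g x y then
    ((((f x).toReal + h x) / (eta g x y).toReal : ℝ) : EReal) else ⊤

/-- Pack a pair into the `ℓ²` product space. -/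
def mk2 (x y : E) : WithLp 2 (E × E) := (WithLp.equiv 2 (E × E)).symm (x, y)

def pr1 (p : WithLp 2 (E × E)) : E := (WithLp.equiv 2 (E × E) p).1

def pr2 (p : WithLp 2 (E × E)) : E := (WithLp.equiv 2 (E × E) p).2

/-- `Q` as a function on the `ℓ²` product space. -/
def Qpair (f : E → EReal) (g h : E → ℝ) (p : WithLp 2 (E × E)) : EReal :=
  Qfun f g h (pr1 p) (pr2 p)

/-- The blanket assumptions of the paper. -/
structure Blanket [CompleteSpace E] (f : E → EReal) (g h : E → ℝ) : Prop where
  f_proper : Proper f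
  f_lsc : LowerSemicontinuous f
  f_cont : ContinuousOn f (edom f)
  f_bddBelow : ∃ m : ℝ, ∀ x, (m : EReal) ≤ f x
  h_lsc : LowerSemicontinuous h
  h_diff : LocLipGradOn h {x | g x ≠ 0}
  g_convex : ConvexOn ℝ Set.univ g
  g_nonneg : ∀ x, 0 ≤ g x
  omega_nonempty : ∃ x, g x ≠ 0
  zeta_nonneg : ∀ x, f x ≠ ⊤ → 0 ≤ zeta f h x

/-- `x` is a critical point of `F`: `0 ∈ ∂̂f(x) + ∇h(x) − F(x)·∂g(x)`. -/
def IsCritF [CompleteSpace E] (f : E → EReal) (g h : E → ℝ) (x : E) : Prop :=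
  g x ≠ 0 ∧ f x ≠ ⊤ ∧
  ∃ u ∈ frSubdiff f x, ∃ v ∈ cvxSubdiff g x,
    u + gradient h x - (Ffun f g h x).toReal • v = 0

/-- The level set `X = {x : F(x) ≤ F(x⁰)}`. -/
def lvlSet (f : E → EReal) (g h : E → ℝ) (x0 : E) : Set E :=
  {x | Ffun f g h x ≤ Ffun f g h x0}

/-- The enlargement `X_{α̲}` of the level set. -/
def Xal (f : E → EReal) (g h : E → ℝ) (x0 : E) (αl : ℝ) : Set E :=
  {z | (Metric.infDist z (lvlSet f g h x0)) ^ 2 ≤ sSup (g '' lvlSet f g h x0) / αl}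

/-- The compact set `𝒴 = ∪_{z ∈ X_{α̲}} ∂g(z)`. -/
def Yset (f : E → EReal) (g h : E → ℝ) (x0 : E) (αl : ℝ) : Set E :=
  ⋃ z ∈ Xal f g h x0 αl, cvxSubdiff g z

/-- The set `S = {(x,y) ∈ X × 𝒴 : η(x,y) > 0}`. -/
def Sset (f : E → EReal) (g h : E → ℝ) (x0 : E) (αl : ℝ) : Set (E × E) :=
  {p | p.1 ∈ lvlSet f g h x0 ∧ p.2 ∈ Yset f g h x0 αl ∧ 0 < eta g p.1 p.2}

/-- The set of accumulation points of a sequence. -/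
def accSet {X : Type*} [TopologicalSpace X] (pt : ℕ → X) : Set X :=
  {p | ∃ σ : ℕ → ℕ, StrictMono σ ∧ Tendsto (pt ∘ σ) atTop (𝓝 p)}

/-- A polyhedral function: its epigraph is a finite intersection of closed half-spaces. -/
def IsPolyhedralFn (φ : E → EReal) : Prop :=
  ∃ (m : ℕ) (w : Fin m → E) (c b : Fin m → ℝ),
    ∀ (x : E) (a : ℝ), (φ x ≤ (a : EReal) ↔ ∀ i, ⟪w i, x⟫ + c i * a ≤ b i)


theorem fconj_ne_bot (g : E → ℝ) (w : E) : fconj g w ≠ ⊥ := by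
  refine ne_bot_of_le_ne_bot (EReal.coe_ne_bot (-g 0)) ?_
  simpa [fconj, fconjE] using
    le_iSup (fun z => ((⟪z, w⟫ : ℝ) : EReal) - ((g z : ℝ) : EReal)) 0

theorem fconj_le_coe_iff {g : E → ℝ} {w : E} {r : ℝ} :
    fconj g w ≤ r ↔ ∀ z, ⟪z, w⟫ - g z ≤ r := by
  simp only [fconj, fconjE, iSup_le_iff, ← EReal.coe_sub, EReal.coe_le_coe_iff]

theorem fconj_add_smul_sub_le {g : E → ℝ} {v w : E} {a b t : ℝ}
    (hw : fconj g w ≤ a) (hv : fconj g v ≤ b) (ht₀ : 0 ≤ t) (ht₁ : t ≤ 1) :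
    fconj g (w + t • (v - w)) ≤ ((1 - t) * a + t * b : ℝ) := by
  rw [fconj_le_coe_iff] at hw hv ⊢
  intro z
  have hsplit :
      ⟪z, w + t • (v - w)⟫ - g z = (1 - t) * (⟪z, w⟫ - g z) + t * (⟪z, v⟫ - g z) := by
    simp only [inner_add_right, inner_smul_right, inner_sub_right]
    ring
  rw [hsplit]
  exact add_le_add (mul_le_mul_of_nonneg_left (hw z) (by linarith))
    (mul_le_mul_of_nonneg_left (hv z) ht₀)

theorem eta_ne_top (g : E → ℝ) (x y : E) : eta g x y ≠ ⊤ :=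
  EReal.add_ne_top (EReal.coe_ne_top _) (by simpa using fconj_ne_bot g y)

theorem fconj_ne_top_of_eta_pos {g : E → ℝ} {x y : E} (hη : 0 < eta g x y) :
    fconj g y ≠ ⊤ := by
  intro htop
  simp [eta, htop, EReal.sub_top] at hη

theorem scaleE_le_coe_mul {F : Type*} {φ : F → EReal} {α r : ℝ} {w : F} (hα : 0 ≤ α)
    (hw : φ w ≤ r) :
    scaleE α φ w ≤ (α * r : ℝ) := by
  rw [scaleE, EReal.coe_mul]
  exact mul_le_mul_of_nonneg_left hw (EReal.coe_nonneg.mpr hα)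

theorem ne_top_of_mem_proxSet {F : Type*} [NormedAddCommGroup F] {φ : F → EReal} {u p q : F}
    (hp : p ∈ proxSet φ u) (hq : φ q ≠ ⊤) : φ p ≠ ⊤ := by
  intro htop
  have := hp q
  rw [htop, EReal.top_add_of_ne_bot (EReal.coe_ne_bot _), top_le_iff] at this
  exact EReal.add_ne_top hq (EReal.coe_ne_top _) this

theorem add_inner_le_of_mem_proxSet {φ : E → EReal} {u p q : E} {a b : ℝ}
    (hp : p ∈ proxSet φ u) (hpa : φ p = a)
    (hseg : ∀ t ∈ Ioc (0 : ℝ) 1, φ (p + t • (q - p)) ≤ ((1 - t) * a + t * b : ℝ)) :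
    a + ⟪u - p, q - p⟫ ≤ b := by
  have hstep : ∀ t ∈ Ioc (0 : ℝ) 1, a + ⟪u - p, q - p⟫ ≤ b + t / 2 * ‖q - p‖ ^ 2 := by
    intro t ht
    have hprox := (hp (p + t • (q - p))).trans (add_le_add (hseg t ht) le_rfl)
    rw [hpa, ← EReal.coe_add, ← EReal.coe_add, EReal.coe_le_coe_iff] at hprox
    have hnorm : ‖p + t • (q - p) - u‖ ^ 2 =
        ‖p - u‖ ^ 2 - 2 * t * ⟪u - p, q - p⟫ + t ^ 2 * ‖q - p‖ ^ 2 := by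
      rw [show p + t • (q - p) - u = (p - u) + t • (q - p) by abel, norm_add_sq_real,
        real_inner_smul_right, norm_smul, Real.norm_eq_abs, abs_of_pos ht.1,
        ← neg_sub u p, inner_neg_left]
      ring
    rw [hnorm] at hprox
    have hscaled : t * (a + ⟪u - p, q - p⟫) ≤ t * (b + t / 2 * ‖q - p‖ ^ 2) := by nlinarith
    exact le_of_mul_le_mul_left hscaled ht.1
  have hlim : Tendsto (fun t : ℝ => b + t / 2 * ‖q - p‖ ^ 2) (𝓝[>] 0) (𝓝 b) := by
    refine tendsto_nhdsWithin_of_tendsto_nhds ?_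
    simpa using ((continuous_id.div_const 2).mul continuous_const).const_add b |>.tendsto 0
  exact ge_of_tendsto hlim (by filter_upwards [Ioc_mem_nhdsGT one_pos] using hstep)

theorem eta_add_le_eta_of_mem_proxSet {g : E → ℝ} {x y yp : E} {α : ℝ} (hα : 0 < α)
    (hη : 0 < eta g x y) (hyp : yp ∈ proxSet (scaleE α (fconj g)) (y + α • x)) :
    eta g x y + ((‖y - yp‖ ^ 2 / α : ℝ) : EReal) ≤ eta g x yp := by
  set gy := (fconj g y).toReal
  have hgy : fconj g y = gy :=
    (EReal.coe_toReal (fconj_ne_top_of_eta_pos hη) (fconj_ne_bot g y)).symm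
  have hyp_top : fconj g yp ≠ ⊤ := by
    intro htop
    refine ne_top_of_mem_proxSet hyp (q := y) ?_ ?_
    · rw [scaleE, hgy, ← EReal.coe_mul]
      exact EReal.coe_ne_top _
    · rw [scaleE, htop, EReal.coe_mul_top_of_pos hα]
  set gp := (fconj g yp).toReal
  have hgp : fconj g yp = gp := (EReal.coe_toReal hyp_top (fconj_ne_bot g yp)).symm
  have hvar : α * gp + ⟪y + α • x - yp, y - yp⟫ ≤ α * gy := by
    refine add_inner_le_of_mem_proxSet hyp (by rw [scaleE, hgp, EReal.coe_mul]) fun t ht => ?_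
    convert scaleE_le_coe_mul hα.le (fconj_add_smul_sub_le hgp.le hgy.le ht.1.le ht.2) using 2
    ring
  have hinner : ⟪y + α • x - yp, y - yp⟫ = ‖y - yp‖ ^ 2 + α * (⟪x, y⟫ - ⟪x, yp⟫) := by
    rw [show y + α • x - yp = (y - yp) + α • x by abel, inner_add_left,
      real_inner_self_eq_norm_sq, real_inner_smul_left, inner_sub_right]
  have hgap : ‖y - yp‖ ^ 2 / α ≤ (⟪x, yp⟫ - gp) - (⟪x, y⟫ - gy) := by
    rw [div_le_iff₀ hα]
    linarith
  rw [eta, eta, hgy, hgp, ← EReal.coe_sub, ← EReal.coe_sub, ← EReal.coe_add,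
    EReal.coe_le_coe_iff]
  linarith

theorem Qfun_ne_top_iff {f : E → EReal} {g h : E → ℝ} {x y : E} :
    Qfun f g h x y ≠ ⊤ ↔ f x ≠ ⊤ ∧ 0 < eta g x y := by
  unfold Qfun
  split_ifs with hxy <;> simp [hxy]

theorem zeta_eq_coe {F : Type*} {f : F → EReal} (h : F → ℝ) {x : F} (hfx : f x ≠ ⊤)
    (hfx' : f x ≠ ⊥) :
    zeta f h x = ((f x).toReal + h x : ℝ) := by
  rw [zeta, EReal.coe_add, EReal.coe_toReal hfx hfx']

/-- The proximal step on `g^*` stays in `dom Q` and satisfies the descent estimate. -/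
theorem statement11 {n : ℕ} (f : EuclideanSpace ℝ (Fin n) → EReal)
    (g h : EuclideanSpace ℝ (Fin n) → ℝ) (hb : Blanket f g h)
    (x y : EuclideanSpace ℝ (Fin n)) (hdom : Qfun f g h x y ≠ ⊤)
    (α : ℝ) (hα : 0 < α) (yp : EuclideanSpace ℝ (Fin n))
    (hyp : yp ∈ proxSet (scaleE α (fconj g)) (y + α • x)) :
    Qfun f g h x yp ≠ ⊤ ∧
    ∀ c : ℝ, Qfun f g h x y ≤ (c : EReal) →
      zeta f h x + ((c / α * ‖y - yp‖ ^ 2 : ℝ) : EReal) ≤ (c : EReal) * eta g x yp := by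
  obtain ⟨hfx, hη⟩ := Qfun_ne_top_iff.mp hdom
  have hascent := eta_add_le_eta_of_mem_proxSet hα hη hyp
  have hηp : 0 < eta g x yp :=
    hη.trans_le ((le_add_of_nonneg_right (EReal.coe_nonneg.mpr (by positivity))).trans hascent)
  refine ⟨Qfun_ne_top_iff.mpr ⟨hfx, hηp⟩, fun c hc => ?_⟩
  set ey := (eta g x y).toReal
  set ep := (eta g x yp).toReal
  have hey : eta g x y = ey := (EReal.coe_toReal (eta_ne_top g x y) hη.ne_bot).symm
  have hep : eta g x yp = ep := (EReal.coe_toReal (eta_ne_top g x yp) hηp.ne_bot).symm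
  have hey_pos : 0 < ey := by exact_mod_cast hey ▸ hη
  set ζr := (f x).toReal + h x
  have hζ : zeta f h x = ζr := zeta_eq_coe h hfx (hb.f_proper.2 x)
  have hζ_nonneg : 0 ≤ ζr := by exact_mod_cast hζ ▸ hb.zeta_nonneg x hfx
  rw [Qfun, if_pos ⟨hfx, hη⟩, EReal.coe_le_coe_iff, div_le_iff₀ hey_pos] at hc
  rw [hey, hep, ← EReal.coe_add, EReal.coe_le_coe_iff] at hascent
  have hc_nonneg : 0 ≤ c := nonneg_of_mul_nonneg_left (hζ_nonneg.trans hc) hey_pos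
  rw [hζ, hep, ← EReal.coe_mul, ← EReal.coe_add, EReal.coe_le_coe_iff]
  calc ζr + c / α * ‖y - yp‖ ^ 2 ≤ c * (ey + ‖y - yp‖ ^ 2 / α) := by
        rw [mul_add, mul_div_assoc', div_mul_eq_mul_div]
        linarith
    _ ≤ c * ep := by gcongr
end Paper
end
end

section
/- Under the blanket assumptions, assume the level set X := {x: F(x) ≤ F(x⁰)} is nonempty and compact, fix α̲ > 0, and let S := {(x,y) ∈ X × 𝒴: η(x,y) > 0} with ḡ := sup_{z∈X} g(z), X_{α̲} := {z: dist²(z,X) ≤ ḡ/α̲}, 𝒴 := ∪_{z ∈ X_{α̲}} ∂g(z). Let M ∈ ℕ, C₀ > 0, and let {(x^{(t)}, y^{(t)})}_{t∈ℕ} ⊆ S be a sequence; write Q_{(t)} := Q(x^{(t)},y^{(t)}) and l(t) := max{ j ≤ t : Q_{(j)} = max{ Q_{(s)} : max(t−M,0) ≤ s ≤ t } }. Suppose Q_{(l(0))} ≤ F(x⁰) and that for every t: ζ(x^{(t+1)}) + C₀(‖x^{(t+1)} − x^{(t)}‖₂² + Q_{(l(t))}‖y^{(t+1)} − y^{(t)}‖₂²)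 ≤ Q_{(l(t))}·η(x^{(t+1)}, y^{(t+1)}). Then the sequence {Q_{(l(t))}} is nonincreasing and converges to some Q∞ ∈ [0, F(x⁰)], and lim_{t→∞} ( ‖x^{(t+1)} − x^{(t)}‖₂² + Q∞·‖y^{(t+1)} − y^{(t)}‖₂² ) = 0. -/
open Filter Topology Set
open scoped RealInnerProductSpace Pointwise NNReal

noncomputable section

namespace Paper

variable {E : Type*} [NormedAddCommGroup E] [InnerProductSpace ℝ E]

/-- The sequence of `Q`-values along an iterate sequence. -/
def Qseq (f : E → EReal) (g h : E → ℝ) (x y : ℕ → E) (t : ℕ) : EReal :=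
  Qfun f g h (x t) (y t)

/-- The maximum of `Q` over the (truncated) window `[t-M, t]`. -/
def winMax (Q : ℕ → EReal) (M t : ℕ) : EReal := ⨆ s ∈ Set.Icc (t - M) t, Q s

/-- `l(t)`: the largest index `j ≤ t` at which `Q j` attains the window maximum. -/
def lfun (Q : ℕ → EReal) (M t : ℕ) : ℕ :=
  @Nat.findGreatest (fun j => Q j = winMax Q M t) (Classical.decPred _) t

set_option maxHeartbeats 2000000 in
/-- Abstract core convergence lemma over the reals. -/
theorem core_lemma (P B C0 : ℝ) (hP : 0 < P) (hB : 1 ≤ B) (hC : 0 < C0)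
    (q eta zs QL dx dy : ℕ → ℝ) (M : ℕ)
    (heta : ∀ t, 0 < eta t) (hzq : ∀ t, zs t = q t * eta t) (hz0 : ∀ t, 0 ≤ zs t)
    (hetaB : ∀ t, eta t ≤ B) (hQLB : ∀ t, QL t ≤ B)
    (hQLP : ∀ t, P ≤ QL t) (hQL : Tendsto QL atTop (𝓝 P))
    (hwin : ∀ t, ∃ s, t + 1 ≤ s ∧ s ≤ t + M + 1 ∧ q s = QL (t + M + 1))
    (hdesc : ∀ t, C0 * (dx t ^ 2 + QL t * dy t ^ 2) ≤ eta (t+1) * (QL t - q (t+1)))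
    (hdx : ∀ t, 0 ≤ dx t) (hdy : ∀ t, 0 ≤ dy t)
    (hetacont : ∀ t, |eta (t+1) - eta t| ≤ B * (dx t + dy t))
    (hzcont : ∀ ε > (0:ℝ), ∃ δ > (0:ℝ), ∀ t, dx t < δ → |zs (t+1) - zs t| < ε) :
    Tendsto (fun t => eta (t+1) * (QL t - q (t+1))) atTop (𝓝 0) := by
  have hq0 : ∀ t, 0 ≤ q t := by
    intro t
    by_contra hlt
    push_neg at hlt
    have h1 := hz0 t
    rw [hzq t] at h1
    nlinarith [heta t]
  have hQL0 : ∀ t, 0 < QL t := fun t => lt_of_lt_of_le hP (hQLP t)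
  have hqQL : ∀ t, q (t+1) ≤ QL t := by
    intro t
    have h1 := hdesc t
    nlinarith [heta (t+1), sq_nonneg (dx t), sq_nonneg (dy t), hC,
      mul_nonneg (le_of_lt (hQL0 t)) (sq_nonneg (dy t))]
  obtain ⟨L, hLeq⟩ : ∃ L : ℕ → ℝ, ∀ t, L t = eta (t+1) * (QL t - q (t+1)) :=
    ⟨_, fun _ => rfl⟩
  have hL0 : ∀ t, 0 ≤ L t := fun t => by
    rw [hLeq t]
    exact mul_nonneg (le_of_lt (heta (t+1))) (by linarith [hqQL t])
  have hLBB : ∀ t, L t ≤ B * (QL t - q (t+1)) := by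
    intro t
    rw [hLeq t]
    exact mul_le_mul_of_nonneg_right (hetaB (t+1)) (by linarith [hqQL t])
  obtain ⟨u, hueq⟩ : ∃ u : ℕ → ℝ, ∀ t, u t = Real.sqrt (L t) := ⟨_, fun _ => rfl⟩
  have hu0 : ∀ t, 0 ≤ u t := fun t => by rw [hueq t]; exact Real.sqrt_nonneg _
  have husq : ∀ t, u t ^ 2 = L t := fun t => by
    rw [hueq t, Real.sq_sqrt (hL0 t)]
  have huL : ∀ t a, L t ≤ a ^ 2 → 0 ≤ a → u t ≤ a := by
    intro t a h ha
    rw [hueq t]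
    calc Real.sqrt (L t) ≤ Real.sqrt (a ^ 2) := Real.sqrt_le_sqrt h
      _ = a := Real.sqrt_sq ha
  have hsC : (0:ℝ) < Real.sqrt C0 := Real.sqrt_pos.mpr hC
  have hsCP : (0:ℝ) < Real.sqrt (C0 * P) := Real.sqrt_pos.mpr (by positivity)
  have hdxu : ∀ t, dx t ≤ u t / Real.sqrt C0 := by
    intro t
    have h1 : C0 * dx t ^ 2 ≤ L t := by
      have h := hdesc t
      rw [hLeq t]
      nlinarith [mul_nonneg (le_of_lt (hQL0 t)) (sq_nonneg (dy t)), hC]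
    rw [le_div_iff₀ hsC]
    have h4 : (dx t * Real.sqrt C0) ^ 2 ≤ u t ^ 2 := by
      rw [husq t, mul_pow, Real.sq_sqrt (le_of_lt hC)]
      nlinarith
    nlinarith [hu0 t, mul_nonneg (hdx t) (le_of_lt hsC)]
  have hdyu : ∀ t, dy t ≤ u t / Real.sqrt (C0 * P) := by
    intro t
    have h1 : (C0 * P) * dy t ^ 2 ≤ L t := by
      have h := hdesc t
      rw [hLeq t]
      have h3 : P * dy t ^ 2 ≤ QL t * dy t ^ 2 :=
        mul_le_mul_of_nonneg_right (hQLP t) (sq_nonneg _)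
      nlinarith [mul_nonneg (le_of_lt hC) (sq_nonneg (dx t)), hC]
    rw [le_div_iff₀ hsCP]
    have h4 : (dy t * Real.sqrt (C0 * P)) ^ 2 ≤ u t ^ 2 := by
      rw [husq t, mul_pow, Real.sq_sqrt (by positivity : (0:ℝ) ≤ C0 * P)]
      nlinarith
    nlinarith [hu0 t, mul_nonneg (hdy t) (le_of_lt hsCP)]
  obtain ⟨c1, hc1def⟩ : ∃ c1 : ℝ, c1 = 1 / Real.sqrt C0 + 1 / Real.sqrt (C0 * P) :=
    ⟨_, rfl⟩
  have hc1 : 0 < c1 := by rw [hc1def]; positivity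
  have hsum : ∀ t, dx t + dy t ≤ c1 * u t := by
    intro t
    have h1 := hdxu t
    have h2 := hdyu t
    have h3 : c1 * u t = u t / Real.sqrt C0 + u t / Real.sqrt (C0 * P) := by
      rw [hc1def]; ring
    linarith
  obtain ⟨c2, hc2def⟩ : ∃ c2 : ℝ, c2 = B * c1 := ⟨_, rfl⟩
  have hc2 : 0 < c2 := by rw [hc2def]; positivity
  have hetachg : ∀ t, |eta (t+1) - eta t| ≤ c2 * u t := by
    intro t
    refine (hetacont t).trans ?_
    rw [hc2def, mul_assoc]
    exact mul_le_mul_of_nonneg_left (hsum t) (by linarith)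
  -- step lemma
  have hstepL : ∀ ε > (0:ℝ), ∃ δ > (0:ℝ), ∃ T : ℕ, ∀ r, T ≤ r →
      (eta (r+1) ≤ δ ∨ P - q (r+1) ≤ δ) → (eta r ≤ ε ∨ P - q r ≤ ε) := by
    intro ε hε
    obtain ⟨ε', hε'def⟩ : ∃ e : ℝ, e = min ε P := ⟨_, rfl⟩
    have hε' : 0 < ε' := by rw [hε'def]; exact lt_min hε hP
    have hε'P : ε' ≤ P := by rw [hε'def]; exact min_le_right _ _
    have hε'ε : ε' ≤ ε := by rw [hε'def]; exact min_le_left _ _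
    obtain ⟨dz, hdz, hdzs⟩ := hzcont (ε' ^ 2 / 8) (by positivity)
    obtain ⟨θ, hθdef⟩ : ∃ th : ℝ,
        th = min (min (ε' / (2 * c2)) (ε' ^ 2 / (8 * P * c2))) (dz * Real.sqrt C0 / 2) :=
      ⟨_, rfl⟩
    have hθ : 0 < θ := by
      rw [hθdef]
      exact lt_min (lt_min (by positivity) (by positivity)) (by positivity)
    have hθ1 : θ ≤ ε' / (2 * c2) := by
      rw [hθdef]; exact le_trans (min_le_left _ _) (min_le_left _ _)
    have hθ2 : θ ≤ ε' ^ 2 / (8 * P * c2) := by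
      rw [hθdef]; exact le_trans (min_le_left _ _) (min_le_right _ _)
    have hθ3 : θ ≤ dz * Real.sqrt C0 / 2 := by
      rw [hθdef]; exact min_le_right _ _
    obtain ⟨δ, hδdef⟩ : ∃ d : ℝ,
        d = min (min (θ ^ 2 / (2 * B)) (ε' / 2)) ((ε' / (2 * c2)) ^ 2 / B) := ⟨_, rfl⟩
    have hδ : 0 < δ := by
      rw [hδdef]
      exact lt_min (lt_min (by positivity) (by positivity)) (by positivity)
    have hδ1 : δ ≤ θ ^ 2 / (2 * B) := by
      rw [hδdef]; exact le_trans (min_le_left _ _) (min_le_left _ _)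
    have hδ2 : δ ≤ ε' / 2 := by
      rw [hδdef]; exact le_trans (min_le_left _ _) (min_le_right _ _)
    have hδ3 : δ ≤ (ε' / (2 * c2)) ^ 2 / B := by
      rw [hδdef]; exact min_le_right _ _
    have hev : ∀ᶠ r in atTop, QL r < P + θ ^ 2 / (2 * B) :=
      hQL.eventually_lt_const (by nlinarith [div_pos (pow_pos hθ 2) (by linarith : (0:ℝ) < 2 * B)])
    obtain ⟨T, hT⟩ := eventually_atTop.mp hev
    refine ⟨δ, hδ, T, ?_⟩
    intro r hr hpred
    rcases hpred with hA | hB2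
    · -- eta (r+1) ≤ δ
      have hLr : L r ≤ δ * B := by
        rw [hLeq r]
        have h2 : QL r - q (r+1) ≤ B := by linarith [hq0 (r+1), hQLB r]
        nlinarith [heta (r+1), hqQL r]
      have hur : u r ≤ ε' / (2 * c2) := by
        refine huL r _ ?_ (by positivity)
        have h2 : δ * B ≤ (ε' / (2 * c2)) ^ 2 := by
          rw [le_div_iff₀ (by linarith : (0:ℝ) < B)] at hδ3
          linarith
        linarith
      have hchg := abs_le.mp (hetachg r)
      have hc2u : c2 * u r ≤ ε' / 2 := by
        have h4 : c2 * u r ≤ c2 * (ε' / (2 * c2)) :=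
          mul_le_mul_of_nonneg_left hur (le_of_lt hc2)
        have h5 : c2 * (ε' / (2 * c2)) = ε' / 2 := by
          rw [mul_comm, div_mul_eq_mul_div, mul_comm (2:ℝ) c2, ← div_div, mul_div_assoc,
            div_self hc2.ne', mul_one]
        linarith
      exact Or.inl (by linarith [hchg.1])
    · -- P - q (r+1) ≤ δ
      have hQLr : QL r < P + θ ^ 2 / (2 * B) := hT r hr
      have hLr : L r ≤ θ ^ 2 := by
        have h3 : L r ≤ B * (θ ^ 2 / (2 * B) + θ ^ 2 / (2 * B)) := by
          refine (hLBB r).trans ?_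
          exact mul_le_mul_of_nonneg_left (by linarith) (by linarith)
        have h4 : B * (θ ^ 2 / (2 * B) + θ ^ 2 / (2 * B)) = θ ^ 2 := by
          field_simp
          ring
        linarith
      have hur : u r ≤ θ := huL r _ hLr (le_of_lt hθ)
      by_cases hcase : eta r ≤ ε
      · exact Or.inl hcase
      push_neg at hcase
      have hεeta : ε' < eta r := lt_of_le_of_lt hε'ε hcase
      right
      have hdxr : dx r < dz := by
        have h1 := hdxu r
        have h2 : u r / Real.sqrt C0 ≤ θ / Real.sqrt C0 := by gcongr
        have h4 : θ / Real.sqrt C0 ≤ dz / 2 := by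
          rw [div_le_iff₀ hsC]
          calc θ ≤ dz * Real.sqrt C0 / 2 := hθ3
            _ = dz / 2 * Real.sqrt C0 := by ring
        linarith
      have hzr := hdzs r hdxr
      have hzlow : zs r ≥ zs (r+1) - ε' ^ 2 / 8 := by
        have h5 := abs_le.mp (le_of_lt hzr)
        linarith [h5.1]
      have hz1 : zs (r+1) ≥ (P - δ) * eta (r+1) := by
        rw [hzq (r+1)]
        have hPδ : 0 ≤ P - δ := by linarith
        exact mul_le_mul_of_nonneg_right (by linarith) (le_of_lt (heta (r+1)))
      have hchg := abs_le.mp (hetachg r)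
      have hc2θ : c2 * u r ≤ c2 * θ := mul_le_mul_of_nonneg_left hur (le_of_lt hc2)
      have hetaup : eta r ≤ eta (r+1) + c2 * θ := by linarith [hchg.1]
      have hc2θ1 : c2 * θ ≤ ε' / 2 := by
        have h6 := mul_le_mul_of_nonneg_left hθ1 (le_of_lt hc2)
        have h8 : c2 * (ε' / (2 * c2)) = ε' / 2 := by
          rw [mul_comm, div_mul_eq_mul_div, mul_comm (2:ℝ) c2, ← div_div, mul_div_assoc,
            div_self hc2.ne', mul_one]
        linarith
      have hetalow : eta (r+1) ≥ ε' / 2 := by linarith [hchg.2]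
      have hc2θ2 : c2 * θ ≤ ε' ^ 2 / (8 * P) := by
        have h6 := mul_le_mul_of_nonneg_left hθ2 (le_of_lt hc2)
        have h8 : c2 * (ε' ^ 2 / (8 * P * c2)) = ε' ^ 2 / (8 * P) := by
          rw [mul_comm, div_mul_eq_mul_div, mul_comm (8 * P) c2, ← div_div, mul_div_assoc,
            div_self hc2.ne', mul_one]
        linarith
      have hgoal : (P - ε') * eta r ≤ zs r := by
        have hPε : 0 ≤ P - ε' := by linarith
        have h9 : (P - ε') * eta r ≤ (P - ε') * (eta (r+1) + c2 * θ) :=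
          mul_le_mul_of_nonneg_left hetaup hPε
        have key1 : (ε' / 2) * (ε' / 2) ≤ (ε' - δ) * eta (r+1) := by
          apply mul_le_mul (by linarith) (by linarith) (by linarith) (by linarith)
        have key2 : (P - ε') * (c2 * θ) ≤ ε' ^ 2 / 8 := by
          have h11 : (P - ε') * (c2 * θ) ≤ P * (c2 * θ) := by
            apply mul_le_mul_of_nonneg_right (by linarith)
            positivity
          have h12 : P * (c2 * θ) ≤ P * (ε' ^ 2 / (8 * P)) :=
            mul_le_mul_of_nonneg_left hc2θ2 (le_of_lt hP)
          have h13 : P * (ε' ^ 2 / (8 * P)) = ε' ^ 2 / 8 := by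
            rw [mul_comm, div_mul_eq_mul_div, mul_comm (8:ℝ) P, ← div_div, mul_div_assoc,
              div_self hP.ne', mul_one]
          linarith
        nlinarith [key1, key2]
      have hetar : 0 < eta r := heta r
      have h14 : (P - ε') * eta r ≤ q r * eta r := by rw [← hzq r]; exact hgoal
      have h15 : P - ε' ≤ q r := le_of_mul_le_mul_right h14 hetar
      linarith
  -- choose argmax indices
  choose s hs1 hs2 hs3 using hwin
  -- chain lemma
  have hchain : ∀ j : ℕ, ∀ ε > (0:ℝ), ∃ T : ℕ, ∀ t, T ≤ t →
      (eta (s t - j) ≤ ε ∨ P - q (s t - j) ≤ ε) := by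
    intro j
    induction j with
    | zero =>
      intro ε hε
      refine ⟨0, fun t _ => Or.inr ?_⟩
      simp only [Nat.sub_zero]
      rw [hs3 t]
      linarith [hQLP (t + M + 1)]
    | succ j ih =>
      intro ε hε
      obtain ⟨δ, hδ, T1, hS⟩ := hstepL ε hε
      obtain ⟨T2, hT2⟩ := ih δ hδ
      refine ⟨max (max (T1 + j + 1) (j + 1)) T2, fun t ht => ?_⟩
      have ht1 : T1 + j + 1 ≤ t := le_trans (le_max_left _ _) (le_trans (le_max_left _ _) ht)
      have ht2 : j + 1 ≤ t := le_trans (le_max_right _ _) (le_trans (le_max_left _ _) ht)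
      have ht3 : T2 ≤ t := le_trans (le_max_right _ _) ht
      have hst := hs1 t
      have heq : s t - j = (s t - (j + 1)) + 1 := by omega
      have hr1 : T1 ≤ s t - (j + 1) := by omega
      have hp := hT2 t ht3
      rw [heq] at hp
      exact hS (s t - (j + 1)) hr1 hp
  -- all t: eventually
  have hall : ∀ ε > (0:ℝ), ∃ T : ℕ, ∀ t, T ≤ t →
      (eta (t + 1) ≤ ε ∨ P - q (t + 1) ≤ ε) := by
    intro ε hε
    choose Tf hTf using fun j => hchain j ε hε
    refine ⟨(Finset.range (M + 1)).sup Tf, fun t ht => ?_⟩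
    have hst1 := hs1 t
    have hst2 := hs2 t
    have hjM : s t - (t + 1) < M + 1 := by omega
    have hTj : Tf (s t - (t + 1)) ≤ t :=
      le_trans (Finset.le_sup (Finset.mem_range.mpr hjM)) ht
    have heq : s t - (s t - (t + 1)) = t + 1 := by omega
    have h16 := hTf (s t - (t + 1)) t hTj
    rwa [heq] at h16
  -- final convergence
  rw [Metric.tendsto_atTop]
  intro ε hε
  have hδ0 : (0:ℝ) < ε / (4 * B) := by positivity
  obtain ⟨T4, hT4⟩ := hall (ε / (4 * B)) hδ0
  have hev : ∀ᶠ r in atTop, QL r < P + ε / (4 * B) := hQL.eventually_lt_const (by linarith)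
  obtain ⟨T3, hT3⟩ := eventually_atTop.mp hev
  refine ⟨max T3 T4, fun t ht => ?_⟩
  have ht3 : T3 ≤ t := le_trans (le_max_left _ _) ht
  have ht4 : T4 ≤ t := le_trans (le_max_right _ _) ht
  have hLt : L t < ε := by
    rcases hT4 t ht4 with hA | hB2
    · have h2 : QL t - q (t+1) ≤ B := by linarith [hq0 (t+1), hQLB t]
      have h3 : L t ≤ ε / (4 * B) * B := by
        rw [hLeq t]
        nlinarith [heta (t+1), hqQL t]
      have h4 : ε / (4 * B) * B = ε / 4 := by
        rw [div_mul_eq_mul_div, mul_comm (4:ℝ) B, ← div_div, mul_div_assoc,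
          div_self (by linarith : B ≠ 0), mul_one]
      linarith
    · have h1 : QL t - q (t+1) ≤ ε / (4 * B) + ε / (4 * B) := by
        have := hT3 t ht3
        linarith
      have h3 : L t ≤ B * (ε / (4 * B) + ε / (4 * B)) := by
        refine (hLBB t).trans ?_
        exact mul_le_mul_of_nonneg_left h1 (by linarith)
      have h4 : B * (ε / (4 * B) + ε / (4 * B)) = ε / 2 := by
        field_simp
        ring
      linarith
  have hdisteq : dist (eta (t+1) * (QL t - q (t+1))) 0 = L t := by
    rw [Real.dist_eq, sub_zero, ← hLeq t, abs_of_nonneg (hL0 t)]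
  rw [hdisteq]
  exact hLt


section Helpers

variable {E : Type*} [NormedAddCommGroup E] [InnerProductSpace ℝ E]

lemma fconj_eq_of_mem_subdiff {g : E → ℝ} {z y : E} (hy : y ∈ cvxSubdiff g z) :
    fconj g y = ((⟪z, y⟫ - g z : ℝ) : EReal) := by
  unfold fconj fconjE
  apply le_antisymm
  · apply iSup_le
    intro w
    have h1 := hy w
    have h2 : (⟪w, y⟫ : ℝ) - g w ≤ ⟪z, y⟫ - g z := by
      rw [inner_sub_right] at h1
      have e1 : ⟪y, w⟫ = ⟪w, y⟫ := real_inner_comm _ _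
      have e2 : ⟪y, z⟫ = ⟪z, y⟫ := real_inner_comm _ _
      linarith
    calc ((⟪w, y⟫ : ℝ) : EReal) - ((g w : ℝ) : EReal)
        = ((⟪w, y⟫ - g w : ℝ) : EReal) := by
          rw [EReal.coe_sub]
      _ ≤ ((⟪z, y⟫ - g z : ℝ) : EReal) := EReal.coe_le_coe_iff.mpr h2
  · rw [EReal.coe_sub]
    exact le_iSup (fun w => ((⟪w, y⟫ : ℝ) : EReal) - ((g w : ℝ) : EReal)) z

lemma Ffun_of_ne_top {f : E → EReal} {g h : E → ℝ} {u : E} (hu : Ffun f g h u ≠ ⊤) :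
    (g u ≠ 0 ∧ f u ≠ ⊤) ∧ Ffun f g h u = ((((f u).toReal + h u) / g u : ℝ) : EReal) := by
  unfold Ffun at *
  split_ifs at * with hc
  · exact ⟨hc, rfl⟩
  · exact absurd rfl hu

end Helpers

set_option maxHeartbeats 4000000 in
/-- Monotonicity and convergence of the nonmonotone line-search merit values,
and vanishing of successive differences. -/
theorem statement16 {n : ℕ} (f : EuclideanSpace ℝ (Fin n) → EReal)
    (g h : EuclideanSpace ℝ (Fin n) → ℝ) (hb : Blanket f g h)
    (x0 : EuclideanSpace ℝ (Fin n)) (hx0 : Ffun f g h x0 ≠ ⊤)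
    (hne : (lvlSet f g h x0).Nonempty) (hcomp : IsCompact (lvlSet f g h x0))
    (αl : ℝ) (hαl : 0 < αl) (M : ℕ) (C₀ : ℝ) (hC₀ : 0 < C₀)
    (x y : ℕ → EuclideanSpace ℝ (Fin n))
    (hS : ∀ t, (x t, y t) ∈ Sset f g h x0 αl)
    (h0 : Qseq f g h x y (lfun (Qseq f g h x y) M 0) ≤ Ffun f g h x0)
    (hdesc : ∀ t : ℕ,
      zeta f h (x (t + 1)) +
          (C₀ : EReal) * (((‖x (t + 1) - x t‖ ^ 2 : ℝ) : EReal) +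
            Qseq f g h x y (lfun (Qseq f g h x y) M t) *
              ((‖y (t + 1) - y t‖ ^ 2 : ℝ) : EReal)) ≤
        Qseq f g h x y (lfun (Qseq f g h x y) M t) * eta g (x (t + 1)) (y (t + 1))) :
    (∀ t, Qseq f g h x y (lfun (Qseq f g h x y) M (t + 1)) ≤
        Qseq f g h x y (lfun (Qseq f g h x y) M t)) ∧
    ∃ Qinf : ℝ, 0 ≤ Qinf ∧ (Qinf : EReal) ≤ Ffun f g h x0 ∧
      Tendsto (fun t => Qseq f g h x y (lfun (Qseq f g h x y) M t)) atTop
        (𝓝 (Qinf : EReal)) ∧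
      Tendsto (fun t => ‖x (t + 1) - x t‖ ^ 2 + Qinf * ‖y (t + 1) - y t‖ ^ 2) atTop
        (𝓝 0) := by
  classical
  -- basic notation
  set X := lvlSet f g h x0 with hXdef
  have hfb : ∀ u, f u ≠ ⊥ := hb.f_proper.2
  -- facts about x0
  obtain ⟨hcond0, hFfx0⟩ := Ffun_of_ne_top (f := f) (g := g) (h := h) hx0
  -- facts for arbitrary members of X
  have hXne : ∀ u, u ∈ X → Ffun f g h u ≠ ⊤ := fun u hu => ne_top_of_le_ne_top hx0 hu
  have hcondX : ∀ u, u ∈ X → g u ≠ 0 ∧ f u ≠ ⊤ := fun u hu => (Ffun_of_ne_top (hXne u hu)).1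
  have hmem : ∀ t, x t ∈ X := fun t => (hS t).1
  have hft : ∀ t, f (x t) ≠ ⊤ := fun t => (hcondX _ (hmem t)).2
  have hgx : ∀ t, g (x t) ≠ 0 := fun t => (hcondX _ (hmem t)).1
  have hgxpos : ∀ t, 0 < g (x t) := fun t => lt_of_le_of_ne (hb.g_nonneg _) (Ne.symm (hgx t))
  have hetaEpos : ∀ t, 0 < eta g (x t) (y t) := fun t => (hS t).2.2
  -- subgradient witnesses
  have hYw : ∀ t, ∃ z, z ∈ Xal f g h x0 αl ∧ y t ∈ cvxSubdiff g z := by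
    intro t
    have h1 := (hS t).2.1
    simp only [Yset, Set.mem_iUnion] at h1
    obtain ⟨z, hz, hyz⟩ := h1
    exact ⟨z, hz, hyz⟩
  choose z hzX hzsub using hYw
  -- real eta
  obtain ⟨etar, hetardef⟩ :
      ∃ er : ℕ → ℝ, ∀ t, er t = ⟪x t, y t⟫ - (⟪z t, y t⟫ - g (z t)) := ⟨_, fun _ => rfl⟩
  have hetar_eq : ∀ t, eta g (x t) (y t) = ((etar t : ℝ) : EReal) := by
    intro t
    unfold eta
    rw [fconj_eq_of_mem_subdiff (hzsub t), ← EReal.coe_sub, hetardef t]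
  have hetapos : ∀ t, 0 < etar t := by
    intro t
    have := hetaEpos t
    rw [hetar_eq t] at this
    exact_mod_cast this
  -- real zeta
  obtain ⟨zr, hzrdef⟩ : ∃ zr : ℕ → ℝ, ∀ t, zr t = (f (x t)).toReal + h (x t) :=
    ⟨_, fun _ => rfl⟩
  have hzeta_eq : ∀ t, zeta f h (x t) = ((zr t : ℝ) : EReal) := by
    intro t
    unfold zeta
    rw [hzrdef t, EReal.coe_add, EReal.coe_toReal (hft t) (hfb _)]
  have hzr0 : ∀ t, 0 ≤ zr t := by
    intro t
    have h1 := hb.zeta_nonneg (x t) (hft t)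
    rw [hzeta_eq t] at h1
    exact_mod_cast h1
  -- real Q
  obtain ⟨qr, hqrdef⟩ : ∃ qr : ℕ → ℝ, ∀ t, qr t = zr t / etar t := ⟨_, fun _ => rfl⟩
  have hQeq : ∀ t, Qseq f g h x y t = ((qr t : ℝ) : EReal) := by
    intro t
    unfold Qseq Qfun
    rw [if_pos ⟨hft t, hetaEpos t⟩, hqrdef t, hzrdef t, hetar_eq t, EReal.toReal_coe]
  have hzq : ∀ t, zr t = qr t * etar t := by
    intro t
    rw [hqrdef t, div_mul_cancel₀ _ (ne_of_gt (hetapos t))]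
  have hqr0 : ∀ t, 0 ≤ qr t := fun t =>
    (hqrdef t) ▸ div_nonneg (hzr0 t) (le_of_lt (hetapos t))
  -- window maximum as a real sequence
  have hIne : ∀ t : ℕ, (Finset.Icc (t - M) t).Nonempty :=
    fun t => ⟨t, Finset.mem_Icc.mpr ⟨Nat.sub_le t M, le_refl t⟩⟩
  obtain ⟨WR, hWRdef⟩ : ∃ W : ℕ → ℝ, ∀ t, W t = (Finset.Icc (t - M) t).sup' (hIne t) qr :=
    ⟨_, fun _ => rfl⟩
  have hWRmem : ∀ t, ∃ j, j ∈ Finset.Icc (t - M) t ∧ qr j = WR t := by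
    intro t
    obtain ⟨j, hj, hje⟩ := Finset.exists_mem_eq_sup' (hIne t) qr
    exact ⟨j, hj, by rw [hWRdef t, hje]⟩
  have hWRub : ∀ t s, s ∈ Finset.Icc (t - M) t → qr s ≤ WR t := by
    intro t s hs
    rw [hWRdef t]
    exact Finset.le_sup' qr hs
  have hwinMax : ∀ t, winMax (Qseq f g h x y) M t = ((WR t : ℝ) : EReal) := by
    intro t
    unfold winMax
    apply le_antisymm
    · apply iSup₂_le
      intro s hs
      rw [hQeq s]
      exact EReal.coe_le_coe_iff.mpr
        (hWRub t s (Finset.mem_Icc.mpr (Set.mem_Icc.mp hs)))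
    · obtain ⟨j, hj, hje⟩ := hWRmem t
      rw [← hje, ← hQeq j]
      exact le_iSup₂ (f := fun s (_ : s ∈ Set.Icc (t - M) t) => Qseq f g h x y s) j
        (Set.mem_Icc.mpr (Finset.mem_Icc.mp hj))
  have hQL_eq : ∀ t, Qseq f g h x y (lfun (Qseq f g h x y) M t) = ((WR t : ℝ) : EReal) := by
    intro t
    obtain ⟨j, hj, hje⟩ := hWRmem t
    have hjle : j ≤ t := (Finset.mem_Icc.mp hj).2
    have hPj : Qseq f g h x y j = winMax (Qseq f g h x y) M t := by
      rw [hQeq j, hwinMax t, hje]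
    have hspec := @Nat.findGreatest_spec j
      (fun j => Qseq f g h x y j = winMax (Qseq f g h x y) M t)
      (Classical.decPred _) t hjle hPj
    unfold lfun
    rw [hspec, hwinMax t]
  -- real descent inequality
  have hrdesc : ∀ t, zr (t+1) +
      C₀ * (‖x (t+1) - x t‖ ^ 2 + WR t * ‖y (t+1) - y t‖ ^ 2) ≤ WR t * etar (t+1) := by
    intro t
    have hd := hdesc t
    rw [hzeta_eq (t+1), hQL_eq t, hetar_eq (t+1)] at hd
    exact_mod_cast hd
  have hWR0 : ∀ t, 0 ≤ WR t := fun t =>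
    le_trans (hqr0 t) (hWRub t t (Finset.mem_Icc.mpr ⟨Nat.sub_le t M, le_refl t⟩))
  have hcdesc : ∀ t, C₀ * (‖x (t+1) - x t‖ ^ 2 + WR t * ‖y (t+1) - y t‖ ^ 2) ≤
      etar (t+1) * (WR t - qr (t+1)) := by
    intro t
    have h1 := hrdesc t
    have h2 : zr (t+1) = qr (t+1) * etar (t+1) := hzq (t+1)
    nlinarith [h1, h2]
  have hq1 : ∀ t, qr (t+1) ≤ WR t := by
    intro t
    have h1 := hcdesc t
    nlinarith [hetapos (t+1), sq_nonneg (‖x (t+1) - x t‖), sq_nonneg (‖y (t+1) - y t‖),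
      mul_nonneg (hWR0 t) (sq_nonneg (‖y (t+1) - y t‖)), hC₀]
  have hWanti : ∀ t, WR (t+1) ≤ WR t := by
    intro t
    rw [hWRdef (t+1)]
    apply Finset.sup'_le
    intro s hs
    rw [Finset.mem_Icc] at hs
    rcases Nat.lt_or_ge s (t+1) with hlt | hge
    · exact hWRub t s (Finset.mem_Icc.mpr ⟨by omega, by omega⟩)
    · have : s = t + 1 := by omega
      rw [this]
      exact hq1 t
  have hWAnti : Antitone WR := antitone_nat_of_succ_le hWanti
  have hbddW : BddBelow (Set.range WR) := ⟨0, by rintro - ⟨t, rfl⟩; exact hWR0 t⟩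
  obtain ⟨Qinf, hQinfdef⟩ : ∃ c : ℝ, c = ⨅ t, WR t := ⟨_, rfl⟩
  have hWtend : Tendsto WR atTop (𝓝 Qinf) := hQinfdef ▸ tendsto_atTop_ciInf hWAnti hbddW
  have hQinf0 : 0 ≤ Qinf := hQinfdef ▸ le_ciInf hWR0
  have hQinfle : ∀ t, Qinf ≤ WR t := fun t => hQinfdef ▸ ciInf_le hbddW t
  -- bound from the initial value
  have hW0 : WR 0 ≤ ((f x0).toReal + h x0) / g x0 := by
    have h1 := h0
    rw [hQL_eq 0, hFfx0] at h1
    exact_mod_cast h1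
  -- first conjunct
  refine ⟨fun t => by rw [hQL_eq (t+1), hQL_eq t]; exact_mod_cast hWanti t, ?_⟩
  -- the EReal convergence of the merit values
  have htendE : Tendsto (fun t => Qseq f g h x y (lfun (Qseq f g h x y) M t)) atTop
      (𝓝 ((Qinf : ℝ) : EReal)) := by
    have heq : (fun t => Qseq f g h x y (lfun (Qseq f g h x y) M t)) =
        fun t => ((WR t : ℝ) : EReal) := funext hQL_eq
    rw [heq]
    exact (continuous_coe_real_ereal.tendsto Qinf).comp hWtend
  refine ⟨Qinf, hQinf0, ?_, htendE, ?_⟩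
  · rw [hFfx0]
    exact_mod_cast le_trans (hQinfle 0) hW0
  -- ========== the hard limit ==========
  -- constants
  have hgcont : Continuous g := by
    have := hb.g_convex
    exact this.locallyLipschitz.continuous
  obtain ⟨Rx, hRx⟩ := isBounded_iff_forall_norm_le.mp hcomp.isBounded
  obtain ⟨p0, hp0⟩ := id hne
  have hRx0 : 0 ≤ Rx := le_trans (norm_nonneg p0) (hRx p0 hp0)
  obtain ⟨w0, hw0X, hw0max⟩ := hcomp.exists_isMaxOn hne hgcont.continuousOn
  obtain ⟨gbar, hgbardef⟩ : ∃ c : ℝ, c = g w0 := ⟨_, rfl⟩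
  have hgbar : ∀ u ∈ X, g u ≤ gbar := fun u hu => hgbardef ▸ hw0max hu
  have hgbar0 : 0 ≤ gbar := hgbardef ▸ hb.g_nonneg w0
  have hetagbar : ∀ t, etar t ≤ gbar := by
    intro t
    have h1 := hzsub t (x t)
    rw [inner_sub_right] at h1
    have e1 : ⟪y t, x t⟫ = ⟪x t, y t⟫ := real_inner_comm _ _
    have e2 : ⟪y t, z t⟫ = ⟪z t, y t⟫ := real_inner_comm _ _
    have h2 := hgbar (x t) (hmem t)
    rw [hetardef t]
    linarith
  -- bound on the subgradient base points
  have hsSup : sSup (g '' X) ≤ gbar := by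
    apply Real.sSup_le
    · rintro - ⟨u, hu, rfl⟩
      exact hgbar u hu
    · exact hgbar0
  obtain ⟨Rz, hRzdef⟩ : ∃ c : ℝ, c = Rx + (Real.sqrt (gbar / αl) + 1) := ⟨_, rfl⟩
  have hRz : ∀ t, ‖z t‖ ≤ Rz := by
    intro t
    have h1 : (Metric.infDist (z t) X) ^ 2 ≤ sSup (g '' X) / αl := hzX t
    have h2 : (Metric.infDist (z t) X) ^ 2 ≤ gbar / αl := by
      refine h1.trans ?_
      exact (div_le_div_iff_of_pos_right hαl).mpr hsSup
    have h3 : Metric.infDist (z t) X ≤ Real.sqrt (gbar / αl) :=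
      (Real.le_sqrt Metric.infDist_nonneg (by positivity)).mpr h2
    have h4 : Metric.infDist (z t) X < Real.sqrt (gbar / αl) + 1 := by linarith
    obtain ⟨w, hwX, hwd⟩ := (Metric.infDist_lt_iff hne).mp h4
    have h5 : ‖z t‖ - ‖w‖ ≤ ‖z t - w‖ := norm_sub_norm_le _ _
    have h6 : dist (z t) w = ‖z t - w‖ := dist_eq_norm _ _
    have h7 := hRx w hwX
    rw [hRzdef]
    linarith [hwd, h6 ▸ hwd]
  have hRz0 : 0 ≤ Rz := by
    rw [hRzdef]
    positivity
  -- bound on the subgradients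
  obtain ⟨w1, hw1B, hw1max⟩ := (isCompact_closedBall (0 : EuclideanSpace ℝ (Fin n))
    (Rz + 1)).exists_isMaxOn ⟨0, Metric.mem_closedBall_self (by linarith)⟩
    hgcont.continuousOn
  obtain ⟨Ry, hRydef⟩ : ∃ c : ℝ, c = max (g w1) 0 := ⟨_, rfl⟩
  have hRy0 : 0 ≤ Ry := hRydef ▸ le_max_right _ _
  have hRy : ∀ t, ‖y t‖ ≤ Ry := by
    intro t
    by_cases hy0 : y t = 0
    · rw [hy0]; simpa using hRy0
    · have hny : 0 < ‖y t‖ := norm_pos_iff.mpr hy0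
      have h1 := hzsub t (z t + ‖y t‖⁻¹ • y t)
      have h2 : (z t + ‖y t‖⁻¹ • y t) - z t = ‖y t‖⁻¹ • y t := add_sub_cancel_left _ _
      rw [h2, real_inner_smul_right, real_inner_self_eq_norm_sq] at h1
      have h3 : ‖y t‖⁻¹ * ‖y t‖ ^ 2 = ‖y t‖ := by
        rw [sq]
        field_simp
      have h4 : ‖z t + ‖y t‖⁻¹ • y t‖ ≤ Rz + 1 := by
        have h5 : ‖(‖y t‖⁻¹ • y t : EuclideanSpace ℝ (Fin n))‖ = 1 := by
          rw [norm_smul, norm_inv, norm_norm]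
          field_simp
        calc ‖z t + ‖y t‖⁻¹ • y t‖ ≤ ‖z t‖ + ‖(‖y t‖⁻¹ • y t : EuclideanSpace ℝ (Fin n))‖ :=
              norm_add_le _ _
          _ ≤ Rz + 1 := by rw [h5]; linarith [hRz t]
      have h6 : g (z t + ‖y t‖⁻¹ • y t) ≤ g w1 := hw1max (by
        rw [Metric.mem_closedBall, dist_zero_right]
        exact h4)
      have h7 : 0 ≤ g (z t) := hb.g_nonneg _
      have h8 : g w1 ≤ Ry := hRydef ▸ le_max_left _ _
      linarith [h1, h3 ▸ h1]
  -- continuity constant for eta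
  obtain ⟨K, hKdef⟩ : ∃ c : ℝ, c = Ry + (Rx + Rz) := ⟨_, rfl⟩
  have hK0 : 0 ≤ K := by rw [hKdef]; positivity
  have hetacont : ∀ t, |etar (t+1) - etar t| ≤
      K * (‖x (t+1) - x t‖ + ‖y (t+1) - y t‖) := by
    intro t
    have hGd : ∀ a b : ℕ, (⟪z a, y a⟫ - g (z a)) - (⟪z b, y b⟫ - g (z b)) ≤
        ⟪z a, y a - y b⟫ := by
      intro a b
      have h1 := hzsub b (z a)
      rw [inner_sub_right] at h1 ⊢
      have e1 : ⟪y b, z a⟫ = ⟪z a, y b⟫ := real_inner_comm _ _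
      have e2 : ⟪y b, z b⟫ = ⟪z b, y b⟫ := real_inner_comm _ _
      linarith
    have hId : ∀ a b : ℕ, ⟪x a, y a⟫ - ⟪x b, y b⟫ =
        ⟪x a - x b, y a⟫ + ⟪x b, y a - y b⟫ := by
      intro a b
      rw [inner_sub_left, inner_sub_right]
      ring
    have hbnd : ∀ (u v : EuclideanSpace ℝ (Fin n)) (c : ℝ), ‖u‖ ≤ c → |⟪u, v⟫| ≤ c * ‖v‖ := by
      intro u v c hc
      calc |⟪u, v⟫| ≤ ‖u‖ * ‖v‖ := abs_real_inner_le_norm u v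
        _ ≤ c * ‖v‖ := mul_le_mul_of_nonneg_right hc (norm_nonneg _)
    rw [abs_le]
    constructor
    · -- lower bound: etar (t+1) - etar t ≥ -K(dx+dy)
      have h1 := hGd (t+1) t
      have h2 := hId (t+1) t
      have h3 : ⟪x (t+1) - x t, y (t+1)⟫ ≥ -(Ry * ‖x (t+1) - x t‖) := by
        have := abs_le.mp (hbnd (y (t+1)) (x (t+1) - x t) Ry (hRy (t+1)))
        have e : ⟪y (t+1), x (t+1) - x t⟫ = ⟪x (t+1) - x t, y (t+1)⟫ := real_inner_comm _ _
        linarith [this.1, e ▸ this.1]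
      have h4 : ⟪x t - z (t+1), y (t+1) - y t⟫ ≥ -((Rx + Rz) * ‖y (t+1) - y t‖) := by
        have hn : ‖x t - z (t+1)‖ ≤ Rx + Rz := by
          calc ‖x t - z (t+1)‖ ≤ ‖x t‖ + ‖z (t+1)‖ := norm_sub_le _ _
            _ ≤ Rx + Rz := add_le_add (hRx _ (hmem t)) (hRz (t+1))
        have := abs_le.mp (hbnd (x t - z (t+1)) (y (t+1) - y t) (Rx + Rz) hn)
        linarith [this.1]
      have h5 : ⟪x t, y (t+1) - y t⟫ - ⟪z (t+1), y (t+1) - y t⟫ =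
          ⟪x t - z (t+1), y (t+1) - y t⟫ := by rw [inner_sub_left]
      rw [hetardef (t+1), hetardef t, hKdef]
      nlinarith [h1, h2, h3, h4, h5, mul_nonneg hRy0 (norm_nonneg (y (t+1) - y t)),
        mul_nonneg (add_nonneg hRx0 hRz0) (norm_nonneg (x (t+1) - x t))]
    · -- upper bound
      have h1 := hGd t (t+1)
      have h2 := hId (t+1) t
      have h3 : ⟪x (t+1) - x t, y (t+1)⟫ ≤ Ry * ‖x (t+1) - x t‖ := by
        have := abs_le.mp (hbnd (y (t+1)) (x (t+1) - x t) Ry (hRy (t+1)))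
        have e : ⟪y (t+1), x (t+1) - x t⟫ = ⟪x (t+1) - x t, y (t+1)⟫ := real_inner_comm _ _
        linarith [this.2, e ▸ this.2]
      have h4 : ⟪x t - z t, y (t+1) - y t⟫ ≤ (Rx + Rz) * ‖y (t+1) - y t‖ := by
        have hn : ‖x t - z t‖ ≤ Rx + Rz := by
          calc ‖x t - z t‖ ≤ ‖x t‖ + ‖z t‖ := norm_sub_le _ _
            _ ≤ Rx + Rz := add_le_add (hRx _ (hmem t)) (hRz t)
        have := abs_le.mp (hbnd (x t - z t) (y (t+1) - y t) (Rx + Rz) hn)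
        linarith [this.2]
      have h5 : ⟪x t, y (t+1) - y t⟫ - ⟪z t, y (t+1) - y t⟫ =
          ⟪x t - z t, y (t+1) - y t⟫ := by rw [inner_sub_left]
      have h6 : ⟪z t, y t - y (t+1)⟫ = -⟪z t, y (t+1) - y t⟫ := by
        rw [← inner_neg_right]
        congr 1
        abel
      rw [hetardef (t+1), hetardef t, hKdef]
      nlinarith [h1, h2, h3, h4, h5, h6, mul_nonneg hRy0 (norm_nonneg (y (t+1) - y t)),
        mul_nonneg (add_nonneg hRx0 hRz0) (norm_nonneg (x (t+1) - x t))]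
  -- uniform continuity of zeta on X
  have hphicont : ContinuousOn (fun u => (f u).toReal + h u) X := by
    intro u hu
    have hcu := hcondX u hu
    have h1 : ContinuousWithinAt f X u := by
      have h2 : ContinuousWithinAt f (edom f) u := hb.f_cont u hcu.2
      exact h2.mono (fun v hv => (hcondX v hv).2)
    have h2 : ContinuousWithinAt (fun v => (f v).toReal) X u :=
      (EReal.tendsto_toReal hcu.2 (hfb u)).comp h1
    have h3 : ContinuousWithinAt h X u := by
      have h4 : DifferentiableAt ℝ h u := hb.h_diff.1 u hcu.1
      exact h4.continuousAt.continuousWithinAt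
    exact h2.add h3
  have hucont := Metric.uniformContinuousOn_iff.mp
    (hcomp.uniformContinuousOn_of_continuous hphicont)
  have hzcont : ∀ ε > (0:ℝ), ∃ δ > (0:ℝ), ∀ t, ‖x (t+1) - x t‖ < δ →
      |zr (t+1) - zr t| < ε := by
    intro ε hε
    obtain ⟨δ, hδ, hd⟩ := hucont ε hε
    refine ⟨δ, hδ, fun t ht => ?_⟩
    have h1 : dist (x (t+1)) (x t) < δ := by rwa [dist_eq_norm]
    have h2 := hd (x (t+1)) (hmem (t+1)) (x t) (hmem t) h1
    rw [Real.dist_eq] at h2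
    rw [hzrdef (t+1), hzrdef t]
    exact h2
  -- the global constant B
  obtain ⟨B, hBdef⟩ : ∃ c : ℝ, c = max (max gbar (WR 0)) (max K 1) := ⟨_, rfl⟩
  have hB1 : 1 ≤ B := hBdef ▸ le_trans (le_max_right K 1) (le_max_right _ _)
  have hetaB : ∀ t, etar t ≤ B := fun t => le_trans (hetagbar t)
    (hBdef ▸ le_trans (le_max_left gbar (WR 0)) (le_max_left _ _))
  have hWRB : ∀ t, WR t ≤ B := fun t => le_trans (hWAnti (Nat.zero_le t))
    (hBdef ▸ le_trans (le_max_right gbar (WR 0)) (le_max_left _ _))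
  have hKB : K ≤ B := hBdef ▸ le_trans (le_max_left K 1) (le_max_right _ _)
  have hetacontB : ∀ t, |etar (t+1) - etar t| ≤
      B * (‖x (t+1) - x t‖ + ‖y (t+1) - y t‖) := by
    intro t
    refine (hetacont t).trans ?_
    apply mul_le_mul_of_nonneg_right hKB
    positivity
  -- the window attainment for the shifted windows
  have hwin : ∀ t, ∃ s, t + 1 ≤ s ∧ s ≤ t + M + 1 ∧ qr s = WR (t + M + 1) := by
    intro t
    obtain ⟨j, hj, hje⟩ := hWRmem (t + M + 1)
    rw [Finset.mem_Icc] at hj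
    exact ⟨j, by omega, by omega, hje⟩
  -- final case analysis
  rcases eq_or_lt_of_le hQinf0 with hQ0 | hQpos
  · -- Qinf = 0
    have hbound : ∀ t, ‖x (t+1) - x t‖ ^ 2 + Qinf * ‖y (t+1) - y t‖ ^ 2 ≤
        B / C₀ * WR t := by
      intro t
      have h1 := hcdesc t
      have h2 : etar (t+1) * (WR t - qr (t+1)) ≤ B * WR t := by
        have h3 : WR t - qr (t+1) ≤ WR t := by linarith [hqr0 (t+1)]
        have h4 : 0 ≤ WR t - qr (t+1) := by linarith [hq1 t]
        nlinarith [hetapos (t+1), hetaB (t+1), hWR0 t]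
      rw [← hQ0]
      have h5 : C₀ * ‖x (t+1) - x t‖ ^ 2 ≤ B * WR t := by
        nlinarith [mul_nonneg (hWR0 t) (sq_nonneg (‖y (t+1) - y t‖)), hC₀]
      rw [div_mul_eq_mul_div, le_div_iff₀ hC₀]
      nlinarith [h5]
    apply squeeze_zero
    · intro t
      have := sq_nonneg (‖x (t+1) - x t‖)
      have := sq_nonneg (‖y (t+1) - y t‖)
      nlinarith [hQinf0]
    · exact hbound
    · have : Tendsto (fun t => B / C₀ * WR t) atTop (𝓝 (B / C₀ * Qinf)) :=
        hWtend.const_mul _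
      rw [← hQ0, mul_zero] at this
      exact this
  · -- Qinf > 0
    have hcore := core_lemma Qinf B C₀ hQpos hB1 hC₀ qr etar zr WR
      (fun t => ‖x (t+1) - x t‖) (fun t => ‖y (t+1) - y t‖) M
      hetapos hzq hzr0 hetaB hWRB hQinfle hWtend hwin hcdesc
      (fun t => norm_nonneg _) (fun t => norm_nonneg _) hetacontB hzcont
    apply squeeze_zero
    · intro t
      have := sq_nonneg (‖x (t+1) - x t‖)
      have := sq_nonneg (‖y (t+1) - y t‖)
      nlinarith [hQinf0]
    · intro t
      show ‖x (t+1) - x t‖ ^ 2 + Qinf * ‖y (t+1) - y t‖ ^ 2 ≤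
        (1 / C₀) * (etar (t+1) * (WR t - qr (t+1)))
      have h1 := hcdesc t
      have h2 : Qinf * ‖y (t+1) - y t‖ ^ 2 ≤ WR t * ‖y (t+1) - y t‖ ^ 2 :=
        mul_le_mul_of_nonneg_right (hQinfle t) (sq_nonneg _)
      rw [one_div, inv_mul_eq_div, le_div_iff₀ hC₀]
      nlinarith [h1, h2]
    · have : Tendsto (fun t => (1 / C₀) * (etar (t+1) * (WR t - qr (t+1)))) atTop
          (𝓝 ((1 / C₀) * 0)) := hcore.const_mul _
      rwa [mul_zero] at this

end Paper
end
end
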